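/- Let p be a point sphere complex. Let q₀, q₁ be isotropic vectors with ⟨q₀,p⟩ ≠ 0 and q₁ ∉ span{q₀,p}, and set M := span{q₀,q₁,p} (an M-sphere pencil). Call an isotropic vector q ∈ M admissible if ⟨q,p⟩ ≠ 0 and ⟨q₀,q⟩ ≠ 0; for admissible q put a_q := ⟨q,p⟩q₀ − ⟨q₀,p⟩q, so ⟨a_q,a_q⟩ = −2⟨q,p⟩⟨q₀,p⟩⟨q₀,q⟩ ≠ 0 and the evolution map q ↦ σ_{a_q} is defined. Let s₀ be an isotropic vector with ⟨s₀, q₀ + ⟨q₀,p⟩p⟩ = 0 (a sphere orthogonal to q₀) and s₀ ∉ M. Then exactly one of the following holds: (i) ⟨s₀, v + ⟨v,p⟩p⟩ = 0 for every isotropic v ∈ M, in which case σ_{a_q}(s₀) = s₀ for every admissible q; or (ii) the 3-dimensional subspace W := span{s₀} + (M ∩ p^⊥) carries the induced form of signature (2,1) and σ_{a_q}(s₀) ∈ W for every admissible q, so that q ↦ σ_{a_q}(s₀) is a family of curvature spheres of the Dupin cyclide W ⊕⊥ W^⊥. -/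

import Mathlib

noncomputable section

/-- The symmetric bilinear form of signature (4,2) on ℝ⁶, modelling ℝ^{4,2}. -/
def B (x y : Fin 6 → ℝ) : ℝ :=
  x 0 * y 0 + x 1 * y 1 + x 2 * y 2 + x 3 * y 3 - x 4 * y 4 - x 5 * y 5

/-- The Lie inversion with respect to the linear sphere complex `a`. -/
def lieInv (a x : Fin 6 → ℝ) : Fin 6 → ℝ :=
  x - (2 * B x a / B a a) • a

/-- The induced form on the subspace `W` has signature (2,1) (it admits a
spanning pseudo-orthonormal triple of Gram matrix diag(1,1,-1)); in particular
`W` is 3-dimensional. -/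
def SigTwoOne (W : Submodule ℝ (Fin 6 → ℝ)) : Prop :=
  ∃ u v w : Fin 6 → ℝ, Submodule.span ℝ ({u, v, w} : Set (Fin 6 → ℝ)) = W ∧
    B u u = 1 ∧ B v v = 1 ∧ B w w = -1 ∧ B u v = 0 ∧ B u w = 0 ∧ B v w = 0

lemma B_add_left (x y z : Fin 6 → ℝ) : B (x + y) z = B x z + B y z := by
  simp [B]; ring

lemma B_smul_left (c : ℝ) (x z : Fin 6 → ℝ) : B (c • x) z = c * B x z := by
  simp [B]; ring

/-- The orthogonal complement of a single vector with respect to `B`. -/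
def perpVec (u : Fin 6 → ℝ) : Submodule ℝ (Fin 6 → ℝ) where
  carrier := {x | B x u = 0}
  add_mem' := fun {a b} ha hb => by
    simp only [Set.mem_setOf_eq] at *
    rw [B_add_left, ha, hb, add_zero]
  zero_mem' := by simp [B]
  smul_mem' := fun c x hx => by
    simp only [Set.mem_setOf_eq] at *
    rw [B_smul_left, hx, mul_zero]

/-!
Put `eᵢ := qᵢ + ⟨qᵢ,p⟩ p`. Then `M ∩ p^⊥ = span{e₀, e₁}`, so `W = span{s₀, e₀, e₁}`, and every
`a_q` lies in `M ∩ p^⊥ ⊆ W`. As `s₀` is isotropic and orthogonal to `e₀`, everything hinges on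
`c := ⟨s₀, e₁⟩`. If `c = 0`, then `s₀` is a nonzero vector in the radical of `W`: it is fixed by
every `σ_{a_q}`, and `W` is degenerate. If `c ≠ 0`, a Gram–Schmidt step splits `W` into the
spacelike line through `e₀` (`⟨e₀,e₀⟩ = ⟨q₀,p⟩² > 0`) and a hyperbolic plane containing `s₀`, so
`W` has signature (2,1); and `σ_{a_q}(s₀) ∈ W` because both `s₀` and `a_q` are in `W`.
-/

open Submodule

lemma B_comm (x y : Fin 6 → ℝ) : B x y = B y x := by
  simp only [B]; ring

lemma B_add_right (x y z : Fin 6 → ℝ) : B x (y + z) = B x y + B x z := by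
  rw [B_comm, B_add_left, B_comm y, B_comm z]

lemma B_smul_right (c : ℝ) (x y : Fin 6 → ℝ) : B x (c • y) = c * B x y := by
  rw [B_comm, B_smul_left, B_comm]

lemma B_sub_left (x y z : Fin 6 → ℝ) : B (x - y) z = B x z - B y z := by
  simp only [B, Pi.sub_apply]; ring

lemma B_sub_right (x y z : Fin 6 → ℝ) : B x (y - z) = B x y - B x z := by
  rw [B_comm, B_sub_left, B_comm y, B_comm z]

lemma B_eq_zero_of_mem_span {S : Set (Fin 6 → ℝ)} {x y : Fin 6 → ℝ}
    (h : ∀ z ∈ S, B x z = 0) (hy : y ∈ span ℝ S) : B x y = 0 := by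
  have hS : span ℝ S ≤ perpVec x := span_le.mpr fun z hz => (B_comm z x).trans (h z hz)
  exact (B_comm x y).trans (hS hy)

lemma span_triple_eq_of_mem {V : Type*} [AddCommGroup V] [Module ℝ V] {x y z a b c : V}
    (hx : x ∈ span ℝ {a, b, c}) (hy : y ∈ span ℝ {a, b, c}) (hz : z ∈ span ℝ {a, b, c})
    (ha : a ∈ span ℝ {x, y, z}) (hb : b ∈ span ℝ {x, y, z}) (hc : c ∈ span ℝ {x, y, z}) :
    span ℝ {x, y, z} = span ℝ {a, b, c} :=
  le_antisymm (span_le.mpr <| by simp [Set.insert_subset_iff, hx, hy, hz])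
    (span_le.mpr <| by simp [Set.insert_subset_iff, ha, hb, hc])

lemma not_sigTwoOne_of_mem_of_forall_B_eq_zero {W : Submodule ℝ (Fin 6 → ℝ)} {s : Fin 6 → ℝ}
    (hs : s ≠ 0) (hsW : s ∈ W) (h : ∀ t ∈ W, B s t = 0) : ¬ SigTwoOne W := by
  rintro ⟨u, v, w, rfl, huu, hvv, hww, huv, huw, hvw⟩
  obtain ⟨α, β, γ, rfl⟩ := mem_span_triple.mp hsW
  have hu := h u (subset_span (by simp))
  have hv := h v (subset_span (by simp))
  have hw := h w (subset_span (by simp))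
  simp only [B_add_left, B_smul_left, B_comm v u, B_comm w u, B_comm w v,
    huu, hvv, hww, huv, huw, hvw] at hu hv hw
  obtain ⟨rfl, rfl, rfl⟩ : α = 0 ∧ β = 0 ∧ γ = 0 := ⟨by linarith, by linarith, by linarith⟩
  simp at hs

lemma sigTwoOne_span_of_isotropic_pair {s e f : Fin 6 → ℝ} (hss : B s s = 0) (hff : B f f = 0)
    (hsf : B s f ≠ 0) (hse : B s e = 0) (hef : B e f = 0) (hee : 0 < B e e) :
    SigTwoOne (span ℝ {s, e, f}) := by
  set c := B s f
  set a := √(B e e)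
  have ha : a ≠ 0 := (Real.sqrt_pos.mpr hee).ne'
  have haa : a * a = B e e := Real.mul_self_sqrt hee.le
  refine ⟨a⁻¹ • e, (2 * c)⁻¹ • s + f, (2 * c)⁻¹ • s - f, span_triple_eq_of_mem ?_ ?_ ?_ ?_ ?_ ?_,
    ?_, ?_, ?_, ?_, ?_, ?_⟩
  · exact smul_mem _ _ (subset_span (by simp))
  · exact add_mem (smul_mem _ _ (subset_span (by simp))) (subset_span (by simp))
  · exact sub_mem (smul_mem _ _ (subset_span (by simp))) (subset_span (by simp))
  · exact mem_span_triple.mpr ⟨0, c, c, by match_scalars <;> field_simp <;> ring⟩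
  · exact mem_span_triple.mpr ⟨a, 0, 0, by match_scalars <;> field_simp <;> ring⟩
  · exact mem_span_triple.mpr ⟨0, 1 / 2, -(1 / 2), by match_scalars <;> ring⟩
  all_goals
    have hes : B e s = 0 := by rw [B_comm]; exact hse
    have hfs : B f s = c := B_comm f s
    simp only [B_add_left, B_add_right, B_sub_left, B_sub_right, B_smul_left, B_smul_right,
      hss, hff, hef, hes, hfs, ← haa]
    field_simp <;> ring

lemma sigTwoOne_span_of_isotropic {s e f : Fin 6 → ℝ} (hss : B s s = 0) (hse : B s e = 0)
    (hsf : B s f ≠ 0) (hee : 0 < B e e) : SigTwoOne (span ℝ {s, e, f}) := by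
  set c := B s f
  set k := B e f / B e e
  set r := B f f - B e f ^ 2 / B e e
  -- `f` is first made orthogonal to `e`, then isotropic by adding a multiple of `s`
  set f' := f - k • e - (r / (2 * c)) • s
  have hes : B e s = 0 := by rw [B_comm]; exact hse
  have hfs : B f s = c := B_comm f s
  have hfe : B f e = B e f := B_comm f e
  have hsf' : B s f' = c := by
    simp only [f', B_sub_right, B_smul_right, hss, hse]; ring
  have hef' : B e f' = 0 := by
    simp only [f', B_sub_right, B_smul_right, hes, k]; field_simp; ring
  have hf'f' : B f' f' = 0 := by
    simp only [f', B_sub_left, B_sub_right, B_smul_left, B_smul_right, hss, hse, hes, hfs, hfe,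
      k, r]
    field_simp
    ring
  have hspan : span ℝ {s, e, f'} = span ℝ {s, e, f} := span_triple_eq_of_mem
    (subset_span (by simp)) (subset_span (by simp))
    (mem_span_triple.mpr ⟨-(r / (2 * c)), -k, 1, by simp only [f']; module⟩)
    (subset_span (by simp)) (subset_span (by simp))
    (mem_span_triple.mpr ⟨r / (2 * c), k, 1, by simp only [f']; module⟩)
  rw [← hspan]
  exact sigTwoOne_span_of_isotropic_pair hss hf'f' (hsf'.trans_ne hsf) hse hef' hee

lemma lieInv_eq_self_of_B_eq_zero {a x : Fin 6 → ℝ} (h : B x a = 0) : lieInv a x = x := by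
  simp [lieInv, h]

lemma lieInv_mem {W : Submodule ℝ (Fin 6 → ℝ)} {a x : Fin 6 → ℝ} (ha : a ∈ W) (hx : x ∈ W) :
    lieInv a x ∈ W :=
  sub_mem hx (smul_mem _ _ ha)

section PointSphereComplex

variable {p : Fin 6 → ℝ}

lemma add_smul_mem_perpVec (hp : B p p = -1) (v : Fin 6 → ℝ) : v + B v p • p ∈ perpVec p := by
  change B (v + B v p • p) p = 0
  rw [B_add_left, B_smul_left, hp]; ring

lemma B_add_smul_self (hp : B p p = -1) (v : Fin 6 → ℝ) :
    B (v + B v p • p) (v + B v p • p) = B v v + B v p ^ 2 := by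
  simp only [B_add_left, B_add_right, B_smul_left, B_smul_right, B_comm p v, hp]; ring

lemma span_triple_inf_perpVec (hp : B p p = -1) (x y : Fin 6 → ℝ) :
    span ℝ {x, y, p} ⊓ perpVec p = span ℝ {x + B x p • p, y + B y p • p} := by
  apply le_antisymm
  · rintro _ ⟨hv, hvp⟩
    obtain ⟨α, β, γ, rfl⟩ := mem_span_triple.mp hv
    change B _ p = 0 at hvp
    rw [B_add_left, B_add_left, B_smul_left, B_smul_left, B_smul_left, hp] at hvp
    obtain rfl : γ = α * B x p + β * B y p := by linarith
    exact mem_span_pair.mpr ⟨α, β, by module⟩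
  · refine span_le.mpr <| Set.insert_subset_iff.mpr ⟨?_, Set.singleton_subset_iff.mpr ?_⟩
    · exact mem_inf.mpr ⟨add_mem (subset_span (by simp)) (smul_mem _ _ (subset_span (by simp))),
        add_smul_mem_perpVec hp x⟩
    · exact mem_inf.mpr ⟨add_mem (subset_span (by simp)) (smul_mem _ _ (subset_span (by simp))),
        add_smul_mem_perpVec hp y⟩

lemma sub_smul_mem_perpVec (x y : Fin 6 → ℝ) : B y p • x - B x p • y ∈ perpVec p := by
  change B (B y p • x - B x p • y) p = 0
  rw [B_sub_left, B_smul_left, B_smul_left]; ring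

lemma B_sub_smul_self {x y : Fin 6 → ℝ} (hx : B x x = 0) (hy : B y y = 0) :
    B (B y p • x - B x p • y) (B y p • x - B x p • y) = -2 * B y p * B x p * B x y := by
  simp only [B_sub_left, B_sub_right, B_smul_left, B_smul_right, B_comm y x, hx, hy]; ring

end PointSphereComplex

theorem stmt_6_general (p q₀ q₁ : Fin 6 → ℝ) (hp : B p p = -1)
    (iq₀ : B q₀ q₀ = 0) (hq₁ : q₁ ≠ 0) (iq₁ : B q₁ q₁ = 0)
    (hq₀p : B q₀ p ≠ 0)
    (s₀ : Fin 6 → ℝ) (hs₀ : s₀ ≠ 0) (is₀ : B s₀ s₀ = 0)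
    (horth : B s₀ (q₀ + B q₀ p • p) = 0)
    (M : Submodule ℝ (Fin 6 → ℝ))
    (hM : M = Submodule.span ℝ ({q₀, q₁, p} : Set (Fin 6 → ℝ)))
    (W : Submodule ℝ (Fin 6 → ℝ))
    (hW : W = Submodule.span ℝ ({s₀} : Set (Fin 6 → ℝ)) ⊔ (M ⊓ perpVec p)) :
    (∀ q ∈ M, B q q = 0 → B q p ≠ 0 → B q₀ q ≠ 0 →
      B (B q p • q₀ - B q₀ p • q) (B q p • q₀ - B q₀ p • q) =
          -2 * B q p * B q₀ p * B q₀ q ∧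
        B (B q p • q₀ - B q₀ p • q) (B q p • q₀ - B q₀ p • q) ≠ 0) ∧
    Xor'
      ((∀ v ∈ M, B v v = 0 → v ≠ 0 → B s₀ (v + B v p • p) = 0) ∧
        (∀ q ∈ M, B q q = 0 → B q p ≠ 0 → B q₀ q ≠ 0 →
          lieInv (B q p • q₀ - B q₀ p • q) s₀ = s₀))
      (SigTwoOne W ∧
        (∀ q ∈ M, B q q = 0 → B q p ≠ 0 → B q₀ q ≠ 0 →
          lieInv (B q p • q₀ - B q₀ p • q) s₀ ∈ W)) := by
  have hW' : W = span ℝ {s₀, q₀ + B q₀ p • p, q₁ + B q₁ p • p} := by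
    rw [hW, hM, span_triple_inf_perpVec hp, ← span_insert]
  have hs₀W : s₀ ∈ W := hW' ▸ subset_span (by simp)
  have hMW : ∀ v ∈ M, v ∈ perpVec p → v ∈ W := fun v hv hvp => hW ▸ mem_sup_right ⟨hv, hvp⟩
  have q₀_mem : q₀ ∈ M := hM ▸ subset_span (by simp)
  have q₁_mem : q₁ ∈ M := hM ▸ subset_span (by simp)
  have p_mem : p ∈ M := hM ▸ subset_span (by simp)
  have haW : ∀ q ∈ M, B q p • q₀ - B q₀ p • q ∈ W := fun q hq =>
    hMW _ (sub_mem (smul_mem _ _ q₀_mem) (smul_mem _ _ hq)) (sub_smul_mem_perpVec q₀ q)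
  refine ⟨fun q _ hqq hqp hq₀q => ⟨B_sub_smul_self iq₀ hqq, ?_⟩, ?_⟩
  · rw [B_sub_smul_self iq₀ hqq]
    exact mul_ne_zero (mul_ne_zero (mul_ne_zero (by norm_num) hqp) hq₀p) hq₀q
  by_cases hc : B s₀ (q₁ + B q₁ p • p) = 0
  · have hs₀_perp : ∀ t ∈ W, B s₀ t = 0 := fun t ht =>
      B_eq_zero_of_mem_span (by simp [is₀, horth, hc]) (hW' ▸ ht)
    refine Or.inl ⟨⟨fun v hv _ _ => hs₀_perp _ ?_, fun q hq _ _ _ => ?_⟩,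
      fun h => not_sigTwoOne_of_mem_of_forall_B_eq_zero hs₀ hs₀W hs₀_perp h.1⟩
    · exact hMW _ (add_mem hv (smul_mem _ _ p_mem)) (add_smul_mem_perpVec hp v)
    · exact lieInv_eq_self_of_B_eq_zero (hs₀_perp _ (haW q hq))
  · have he₀ : 0 < B (q₀ + B q₀ p • p) (q₀ + B q₀ p • p) := by
      rw [B_add_smul_self hp, iq₀, zero_add]; positivity
    exact Or.inr ⟨⟨hW' ▸ sigTwoOne_span_of_isotropic is₀ horth hc he₀,
      fun q hq _ _ _ => lieInv_mem (haW q hq) hs₀W⟩, fun h => hc (h.1 q₁ q₁_mem iq₁ hq₁)⟩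

/-- Evolving a sphere `s₀` orthogonal to `q₀` by the evolution
map associated to the M-sphere pencil `M = span{q₀,q₁,p}`: the evolution maps
`σ_{a_q}` are defined (`⟨a_q,a_q⟩ = -2⟨q,p⟩⟨q₀,p⟩⟨q₀,q⟩ ≠ 0`), and exactly one
of the following holds: either `s₀` is orthogonal to every sphere of the pencil
and is fixed by all evolution maps, or the subspace
`W = span{s₀} + (M ∩ p^⊥)` carries signature (2,1) and contains all spheres
`σ_{a_q}(s₀)`, i.e. the evolution yields a curvature sphere family of the Dupin
cyclide `W ⊕⊥ W^⊥`. -/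
theorem stmt_6 (p q₀ q₁ : Fin 6 → ℝ) (hp : B p p = -1)
    (hq₀ : q₀ ≠ 0) (iq₀ : B q₀ q₀ = 0) (hq₁ : q₁ ≠ 0) (iq₁ : B q₁ q₁ = 0)
    (hq₀p : B q₀ p ≠ 0)
    (hq₁M : q₁ ∉ Submodule.span ℝ ({q₀, p} : Set (Fin 6 → ℝ)))
    (s₀ : Fin 6 → ℝ) (hs₀ : s₀ ≠ 0) (is₀ : B s₀ s₀ = 0)
    (horth : B s₀ (q₀ + B q₀ p • p) = 0)
    (M : Submodule ℝ (Fin 6 → ℝ))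
    (hM : M = Submodule.span ℝ ({q₀, q₁, p} : Set (Fin 6 → ℝ)))
    (hs₀M : s₀ ∉ M)
    (W : Submodule ℝ (Fin 6 → ℝ))
    (hW : W = Submodule.span ℝ ({s₀} : Set (Fin 6 → ℝ)) ⊔ (M ⊓ perpVec p)) :
    (∀ q ∈ M, B q q = 0 → B q p ≠ 0 → B q₀ q ≠ 0 →
      B (B q p • q₀ - B q₀ p • q) (B q p • q₀ - B q₀ p • q) =
          -2 * B q p * B q₀ p * B q₀ q ∧
        B (B q p • q₀ - B q₀ p • q) (B q p • q₀ - B q₀ p • q) ≠ 0) ∧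
    Xor'
      ((∀ v ∈ M, B v v = 0 → v ≠ 0 → B s₀ (v + B v p • p) = 0) ∧
        (∀ q ∈ M, B q q = 0 → B q p ≠ 0 → B q₀ q ≠ 0 →
          lieInv (B q p • q₀ - B q₀ p • q) s₀ = s₀))
      (SigTwoOne W ∧
        (∀ q ∈ M, B q q = 0 → B q p ≠ 0 → B q₀ q ≠ 0 →
          lieInv (B q p • q₀ - B q₀ p • q) s₀ ∈ W)) :=
  stmt_6_general p q₀ q₁ hp iq₀ hq₁ iq₁ hq₀p s₀ hs₀ is₀ horth M hM W hW
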